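/- Let x⋆ ∈ ℝ^n be a critical point (T_γ(x⋆) = x⋆). Assume f is three times continuously differentiable on a neighborhood of x⋆ and that prox_{γg} is continuously differentiable on a neighborhood of x⋆ − γ∇f(x⋆). Then there exists an open neighborhood U of x⋆ on which φ_γ is twice continuously differentiable and such that, defining B(x) := γ^{−1} Q_γ(x)(I − P_γ(x) Q_γ(x)) with Q_γ(x) := I − γ∇²f(x) and P_γ(x) := Jprox_{γg}(x − γ∇f(x)) (the Jacobian matrix of prox_{γg} at x − γ∇f(x)), one has for all x ∈ U: ‖∇²φ_γ(x) − B(x)‖ ≤ γ ‖∇³f(x)‖ ‖R_γ(x)‖, where ‖∇²φ_γ(x) − B(x)‖ is the operator norm and ‖∇³f(x)‖ is the operator norm of the third derivative of f at x viewed as a trilinear form. -/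

import Mathlib

noncomputable section

open scoped RealInnerProductSpace
open Filter Topology Bornology

/-- The common setting: `f : ℝⁿ → ℝ` is `C^{1,1}` with gradient `f'`;
`g : ℝⁿ → ℝ ∪ {+∞}` is proper, lsc and `ρ`-weakly convex; `φ = f + g` is bounded below;
`γ ∈ (0, min (1/L_f) (1/ρ))`; and `prox x` is the unique minimizer of
`z ↦ g z + ‖z - x‖²/(2γ)`. -/
structure FBEData (n : ℕ) where
  f : EuclideanSpace ℝ (Fin n) → ℝ
  g : EuclideanSpace ℝ (Fin n) → EReal
  Lf : ℝ
  ρ : ℝ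
  γ : ℝ
  f' : EuclideanSpace ℝ (Fin n) → EuclideanSpace ℝ (Fin n)
  prox : EuclideanSpace ℝ (Fin n) → EuclideanSpace ℝ (Fin n)
  hLf : 0 < Lf
  hρ : 0 < ρ
  hγ0 : 0 < γ
  hγ : γ < min (1 / Lf) (1 / ρ)
  hf : ∀ x, HasGradientAt f (f' x) x
  hf_lip : LipschitzWith (Real.toNNReal Lf) f'
  hg_proper : ∃ x, g x ≠ ⊤
  hg_nebot : ∀ x, g x ≠ ⊥
  hg_lsc : LowerSemicontinuous g
  hg_wc : ∀ x y : EuclideanSpace ℝ (Fin n), ∀ t : ℝ, 0 ≤ t → t ≤ 1 →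
    g (t • x + (1 - t) • y) + (((ρ / 2) * ‖t • x + (1 - t) • y‖ ^ 2 : ℝ) : EReal)
      ≤ (t : EReal) * (g x + (((ρ / 2) * ‖x‖ ^ 2 : ℝ) : EReal))
        + ((1 - t : ℝ) : EReal) * (g y + (((ρ / 2) * ‖y‖ ^ 2 : ℝ) : EReal))
  hφ_bdd : ∃ c : ℝ, ∀ x, (c : EReal) ≤ (f x : EReal) + g x
  hprox_min : ∀ x z,
    g (prox x) + (((1 / (2 * γ)) * ‖prox x - x‖ ^ 2 : ℝ) : EReal)
      ≤ g z + (((1 / (2 * γ)) * ‖z - x‖ ^ 2 : ℝ) : EReal)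
  hprox_unique : ∀ x z,
    g z + (((1 / (2 * γ)) * ‖z - x‖ ^ 2 : ℝ) : EReal)
      ≤ g (prox x) + (((1 / (2 * γ)) * ‖prox x - x‖ ^ 2 : ℝ) : EReal) → z = prox x

namespace FBEData

variable {n : ℕ} (S : FBEData n)

/-- The objective `φ = f + g` (with values in `ℝ ∪ {±∞}`). -/
def phi (x : EuclideanSpace ℝ (Fin n)) : EReal := (S.f x : EReal) + S.g x

/-- The forward-backward envelope, as an extended-real-valued infimum. -/
def fbeE (x : EuclideanSpace ℝ (Fin n)) : EReal :=
  ⨅ u : EuclideanSpace ℝ (Fin n),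
    ((S.f x + ⟪S.f' x, u - x⟫ + (1 / (2 * S.γ)) * ‖u - x‖ ^ 2 : ℝ) : EReal) + S.g u

/-- The (real-valued) forward-backward envelope `φ_γ`. -/
def fbe (x : EuclideanSpace ℝ (Fin n)) : ℝ := (S.fbeE x).toReal

/-- The forward-backward (proximal gradient) operator `T_γ`. -/
def T (x : EuclideanSpace ℝ (Fin n)) : EuclideanSpace ℝ (Fin n) :=
  S.prox (x - S.γ • S.f' x)

/-- The fixed-point residual `R_γ`. -/
def R (x : EuclideanSpace ℝ (Fin n)) : EuclideanSpace ℝ (Fin n) :=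
  (1 / S.γ) • (x - S.T x)

/-- The Moreau envelope `g^γ` of `g`. -/
def moreauE (y : EuclideanSpace ℝ (Fin n)) : EReal :=
  ⨅ z : EuclideanSpace ℝ (Fin n),
    S.g z + (((1 / (2 * S.γ)) * ‖z - y‖ ^ 2 : ℝ) : EReal)

end FBEData

/-- Abbreviation for Euclidean space `ℝⁿ`. -/
abbrev Euc (n : ℕ) := EuclideanSpace ℝ (Fin n)

section Aux

variable {E : Type*} [NormedAddCommGroup E] [InnerProductSpace ℝ E] [CompleteSpace E]

omit [CompleteSpace E] in
theorem fbe_quad_expand (γ : ℝ) (hγ : γ ≠ 0) (p y z : E) :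
    1 / (2*γ) * ‖p - z‖^2 =
      1 / (2*γ) * ‖p - y‖^2 + ⟪γ⁻¹ • (y - p), z - y⟫ + 1 / (2*γ) * ‖z - y‖^2 := by
  have h1 : p - z = (p - y) + (y - z) := by abel
  rw [h1, norm_add_sq_real]
  have h2 : ⟪p - y, y - z⟫ = ⟪y - p, z - y⟫ := by
    rw [← inner_neg_neg (𝕜 := ℝ)]; congr 1 <;> abel
  rw [h2, real_inner_smul_left, ← norm_neg (y - z)]
  have h3 : -(y - z) = z - y := by abel
  rw [h3]; field_simp

omit [CompleteSpace E] in
theorem fbe_key_inner (γ : ℝ) (a r h : E) (A : E →L[ℝ] E)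
    (hA : ∀ v w : E, ⟪A v, w⟫ = ⟪v, A w⟫) :
    ⟪a, h⟫ - γ/2 * (⟪a, A h⟫ + ⟪A h, a⟫) + ⟪r - a, h - γ • A h⟫
      = ⟪r - γ • A r, h⟫ := by
  have h1 : ⟪A h, a⟫ = ⟪a, A h⟫ := real_inner_comm _ _
  have h2 : ⟪A r, h⟫ = ⟪r, A h⟫ := hA r h
  simp only [inner_sub_left, inner_sub_right, real_inner_smul_left, real_inner_smul_right,
    h1, h2]
  ring

/-- Gradient of a function admitting two-sided quadratic bounds (Moreau envelope). -/
theorem fbe_moreau_grad (γ : ℝ) (hγ : 0 < γ) (prox : E → E) (m : E → ℝ)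
    (hub : ∀ y z, m z ≤ m y + ⟪γ⁻¹ • (y - prox y), z - y⟫ + 1 / (2*γ) * ‖z - y‖^2)
    {y₀ : E} (hc : ContinuousAt prox y₀) :
    HasGradientAt m (γ⁻¹ • (y₀ - prox y₀)) y₀ := by
  set Gm : E → E := fun y => γ⁻¹ • (y - prox y) with hGm
  rw [hasGradientAt_iff_hasFDerivAt, hasFDerivAt_iff_isLittleO_nhds_zero]
  rw [Asymptotics.isLittleO_iff]
  intro c hc0
  have hGmc : ContinuousAt Gm y₀ := (continuousAt_id.sub hc).const_smul γ⁻¹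
  have h1 : Filter.Tendsto (fun h : E => ‖Gm (y₀ + h) - Gm y₀‖) (nhds 0) (nhds 0) := by
    have ha : Filter.Tendsto (fun h : E => y₀ + h) (nhds 0) (nhds y₀) := by
      simpa using (continuous_add_left y₀).tendsto' (0 : E) y₀ (by simp)
    have hb : Filter.Tendsto (fun h : E => Gm (y₀ + h)) (nhds 0) (nhds (Gm y₀)) :=
      hGmc.tendsto.comp ha
    have hcx : Filter.Tendsto (fun h : E => Gm (y₀ + h) - Gm y₀) (nhds 0) (nhds 0) := by
      simpa using hb.sub (tendsto_const_nhds (x := Gm y₀))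
    simpa using hcx.norm
  have h2 : ∀ᶠ h : E in nhds 0, ‖Gm (y₀ + h) - Gm y₀‖ ≤ c/2 :=
    (h1.eventually (gt_mem_nhds (show (0:ℝ) < c/2 by linarith))).mono fun h hh => le_of_lt hh
  have h3 : ∀ᶠ h : E in nhds 0, ‖h‖ ≤ γ * c := by
    have ht : Filter.Tendsto (fun h : E => ‖h‖) (nhds 0) (nhds 0) := by
      simpa using (continuous_norm (E := E)).tendsto 0
    exact (ht.eventually (gt_mem_nhds (show (0:ℝ) < γ*c by positivity))).mono
      fun h hh => le_of_lt hh
  filter_upwards [h2, h3] with h hh2 hh3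
  have key_ub := hub y₀ (y₀ + h)
  have key_lb := hub (y₀ + h) y₀
  simp only [add_sub_cancel_left] at key_ub
  have hsub : y₀ - (y₀ + h) = -h := by abel
  rw [hsub, norm_neg] at key_lb
  set err : ℝ := m (y₀ + h) - m y₀ - (InnerProductSpace.toDual ℝ E) (Gm y₀) h with herr
  have herr' : err = m (y₀ + h) - m y₀ - ⟪Gm y₀, h⟫ := by
    rw [herr, InnerProductSpace.toDual_apply_apply]
  have hq : 1 / (2*γ) * ‖h‖^2 ≤ (c/2) * ‖h‖ := by
    rw [pow_two, ← mul_assoc]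
    have hn : (0:ℝ) ≤ ‖h‖ := norm_nonneg _
    have : 1 / (2*γ) * ‖h‖ ≤ c/2 := by
      rw [div_mul_eq_mul_div, div_le_div_iff₀ (by linarith) (by norm_num)]
      nlinarith
    nlinarith
  have hub' : err ≤ (c/2) * ‖h‖ := by
    rw [herr']
    nlinarith [hq]
  have hlb' : -(c * ‖h‖) ≤ err := by
    rw [herr']
    have hinner : ⟪Gm (y₀ + h), -h⟫ = -⟪Gm (y₀+h), h⟫ := by
      rw [inner_neg_right]
    rw [hinner] at key_lb
    have hcs : |⟪Gm (y₀ + h) - Gm y₀, h⟫| ≤ ‖Gm (y₀+h) - Gm y₀‖ * ‖h‖ :=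
      abs_real_inner_le_norm _ _
    have hdiff : ⟪Gm (y₀ + h), h⟫ - ⟪Gm y₀, h⟫ = ⟪Gm (y₀ + h) - Gm y₀, h⟫ := by
      rw [inner_sub_left]
    have h4 : ⟪Gm (y₀ + h), h⟫ - ⟪Gm y₀, h⟫ ≥ -((c/2) * ‖h‖) := by
      rw [hdiff]
      have := neg_abs_le ⟪Gm (y₀ + h) - Gm y₀, h⟫
      nlinarith [norm_nonneg h, hcs, mul_le_mul_of_nonneg_right hh2 (norm_nonneg h)]
    nlinarith [hq]
  rw [Real.norm_eq_abs, abs_le]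
  refine ⟨hlb', ?_⟩
  calc err ≤ (c/2) * ‖h‖ := hub'
    _ ≤ c * ‖h‖ := by nlinarith [norm_nonneg h, hc0.le]

end Aux

namespace FBEData

variable {n : ℕ} (S : FBEData n)

theorem hγne : S.γ ≠ 0 := ne_of_gt S.hγ0

theorem g_prox_ne_top (y : Euc n) : S.g (S.prox y) ≠ ⊤ := by
  obtain ⟨x₀, hx₀⟩ := S.hg_proper
  intro htop
  have h := S.hprox_min y x₀
  rw [htop, EReal.top_add_coe] at h
  exact (EReal.add_lt_top hx₀ (EReal.coe_ne_top _)).ne (top_le_iff.mp h)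

/-- The real value of `g` at `prox y`. -/
def gr (y : Euc n) : ℝ := (S.g (S.prox y)).toReal

theorem coe_gr (y : Euc n) : ((S.gr y : ℝ) : EReal) = S.g (S.prox y) :=
  EReal.coe_toReal (S.g_prox_ne_top y) (S.hg_nebot _)

/-- The real-valued Moreau envelope. -/
def m (y : Euc n) : ℝ := S.gr y + 1 / (2 * S.γ) * ‖S.prox y - y‖^2

theorem m_ub (y z : Euc n) :
    S.m z ≤ S.gr y + 1 / (2 * S.γ) * ‖S.prox y - z‖^2 := by
  have h := S.hprox_min z (S.prox y)
  rw [← S.coe_gr z, ← S.coe_gr y, ← EReal.coe_add, ← EReal.coe_add] at h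
  exact EReal.coe_le_coe_iff.mp h

theorem m_quad_ub (y z : Euc n) :
    S.m z ≤ S.m y + ⟪S.γ⁻¹ • (y - S.prox y), z - y⟫ + 1 / (2 * S.γ) * ‖z - y‖^2 := by
  have h := S.m_ub y z
  rw [fbe_quad_expand S.γ S.hγne (S.prox y) y z] at h
  unfold FBEData.m at h ⊢
  linarith

theorem m_grad {y₀ : Euc n} (hc : ContinuousAt S.prox y₀) :
    HasGradientAt S.m (S.γ⁻¹ • (y₀ - S.prox y₀)) y₀ :=
  fbe_moreau_grad S.γ S.hγ0 S.prox S.m (fun y z => S.m_quad_ub y z) hc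


theorem fbe_eq : S.fbe = fun x =>
    (S.f x - S.γ/2 * ⟪S.f' x, S.f' x⟫) + S.m (x - S.γ • S.f' x) := by
  funext x
  have hterm : ∀ u : Euc n, S.f x + ⟪S.f' x, u - x⟫ + 1 / (2 * S.γ) * ‖u - x‖^2
      = (S.f x - S.γ/2 * ⟪S.f' x, S.f' x⟫)
        + 1 / (2 * S.γ) * ‖u - (x - S.γ • S.f' x)‖^2 := by
    intro u
    have h1 : u - (x - S.γ • S.f' x) = (u - x) + S.γ • S.f' x := by abel
    rw [h1, norm_add_sq_real, real_inner_smul_right, real_inner_comm (u - x) (S.f' x),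
      norm_smul, Real.norm_eq_abs, mul_pow, sq_abs, ← real_inner_self_eq_norm_sq (S.f' x)]
    have hγ := S.hγne
    field_simp
    ring
  have hrw : S.fbeE x = ⨅ u : Euc n,
      (((S.f x - S.γ/2 * ⟪S.f' x, S.f' x⟫)
        + 1 / (2 * S.γ) * ‖u - (x - S.γ • S.f' x)‖^2 : ℝ) : EReal) + S.g u := by
    unfold fbeE
    exact iInf_congr fun u => by rw [hterm u]
  have hval : S.fbeE x = (((S.f x - S.γ/2 * ⟪S.f' x, S.f' x⟫)
      + 1 / (2 * S.γ) * ‖S.prox (x - S.γ • S.f' x) - (x - S.γ • S.f' x)‖^2 : ℝ) : EReal)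
      + S.g (S.prox (x - S.γ • S.f' x)) := by
    rw [hrw]
    apply le_antisymm
    · exact iInf_le _ (S.prox (x - S.γ • S.f' x))
    · refine le_iInf fun u => ?_
      have h := S.hprox_min (x - S.γ • S.f' x) u
      rw [EReal.coe_add, EReal.coe_add, add_assoc, add_assoc]
      refine add_le_add le_rfl ?_
      calc ((1 / (2 * S.γ) * ‖S.prox (x - S.γ • S.f' x) - (x - S.γ • S.f' x)‖^2 : ℝ) : EReal)
            + S.g (S.prox (x - S.γ • S.f' x))
          = S.g (S.prox (x - S.γ • S.f' x))
            + ((1 / (2 * S.γ) * ‖S.prox (x - S.γ • S.f' x) - (x - S.γ • S.f' x)‖^2 : ℝ) : EReal) :=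
          add_comm _ _
        _ ≤ S.g u + ((1 / (2 * S.γ) * ‖u - (x - S.γ • S.f' x)‖^2 : ℝ) : EReal) := h
        _ = ((1 / (2 * S.γ) * ‖u - (x - S.γ • S.f' x)‖^2 : ℝ) : EReal) + S.g u := add_comm _ _
  unfold FBEData.fbe
  rw [hval, ← S.coe_gr (x - S.γ • S.f' x), ← EReal.coe_add, EReal.toReal_coe]
  unfold FBEData.m
  ring

theorem f''_symm (f'' : Euc n → (Euc n →L[ℝ] Euc n))
    (hf'' : ∀ x, HasFDerivAt S.f' (f'' x) x) (x v w : Euc n) :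
    ⟪f'' x v, w⟫ = ⟪v, f'' x w⟫ := by
  let ℓ : Euc n →L[ℝ] (Euc n →L[ℝ] ℝ) :=
    (InnerProductSpace.toDual ℝ (Euc n)).toContinuousLinearEquiv.toContinuousLinearMap
  have h1 : ∀ y, HasFDerivAt S.f (ℓ (S.f' y)) y := fun y => (S.hf y).hasFDerivAt
  have h2 : HasFDerivAt (fun y => ℓ (S.f' y)) (ℓ.comp (f'' x)) x :=
    ℓ.hasFDerivAt.comp x (hf'' x)
  have h3 := second_derivative_symmetric h1 h2 v w
  have h4 : ⟪f'' x v, w⟫ = ⟪f'' x w, v⟫ := h3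
  rw [h4, real_inner_comm]

end FBEData
set_option maxHeartbeats 1000000 in
/-- around a critical point `x⋆` (under the assumptions of Statement 4), `φ_γ` is
twice continuously differentiable on a neighborhood `U` of `x⋆`, and the generalized Hessian
`B(x) := γ⁻¹ Q_γ(x)(I - P_γ(x) Q_γ(x))` satisfies
`‖∇²φ_γ(x) - B(x)‖ ≤ γ ‖∇³f(x)‖ ‖R_γ(x)‖` for all `x ∈ U`. -/
theorem stmt5 {n : ℕ} (S : FBEData n)
    (f'' : Euc n → (Euc n →L[ℝ] Euc n))
    (hf'' : ∀ x, HasFDerivAt S.f' (f'' x) x)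
    (hf''cont : Continuous f'') (hf''lip : LocallyLipschitz f'')
    (xs : Euc n) (hcrit : S.T xs = xs)
    (f3 : Euc n → (Euc n →L[ℝ] Euc n →L[ℝ] Euc n))
    (V : Set (Euc n)) (hV : V ∈ 𝓝 xs)
    (hf3 : ∀ x ∈ V, HasFDerivAt f'' (f3 x) x) (hf3cont : ContinuousOn f3 V)
    (P : Euc n → (Euc n →L[ℝ] Euc n))
    (W : Set (Euc n)) (hW : W ∈ 𝓝 (xs - S.γ • S.f' xs))
    (hP : ∀ y ∈ W, HasFDerivAt S.prox (P y) y) (hPcont : ContinuousOn P W) :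
    ∃ U : Set (Euc n), IsOpen U ∧ xs ∈ U ∧
      ∃ G : Euc n → Euc n, ∃ H : Euc n → (Euc n →L[ℝ] Euc n),
        (∀ x ∈ U, HasGradientAt S.fbe (G x) x) ∧
        (∀ x ∈ U, HasFDerivAt G (H x) x) ∧ ContinuousOn H U ∧
        (∀ x ∈ U,
          ‖H x - S.γ⁻¹ •
              ((ContinuousLinearMap.id ℝ (Euc n) - S.γ • f'' x).comp
                (ContinuousLinearMap.id ℝ (Euc n)
                  - (P (x - S.γ • S.f' x)).comp
                      (ContinuousLinearMap.id ℝ (Euc n) - S.γ • f'' x)))‖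
            ≤ S.γ * ‖f3 x‖ * ‖S.R x‖) := by
  have hγ0 := S.hγ0
  have hγne : S.γ ≠ 0 := ne_of_gt hγ0
  set L : Euc n → Euc n := fun x => x - S.γ • S.f' x with hLdef
  set Q : Euc n → (Euc n →L[ℝ] Euc n) :=
    fun x => ContinuousLinearMap.id ℝ (Euc n) - S.γ • f'' x with hQdef
  have hf'cont : Continuous S.f' := S.hf_lip.continuous
  have hLcont : Continuous L := continuous_id.sub (hf'cont.const_smul S.γ)
  have hLder : ∀ x, HasFDerivAt L (Q x) x := fun x =>
    (hasFDerivAt_id x).sub ((hf'' x).const_smul S.γ)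
  set U : Set (Euc n) := interior V ∩ L ⁻¹' (interior W) with hUdef
  have hUopen : IsOpen U := isOpen_interior.inter (isOpen_interior.preimage hLcont)
  have hxsU : xs ∈ U := by
    refine ⟨mem_interior_iff_mem_nhds.2 hV, ?_⟩
    show L xs ∈ interior W
    exact mem_interior_iff_mem_nhds.2 hW
  have hUV : ∀ x ∈ U, x ∈ V := fun x hx => interior_subset hx.1
  have hUW : ∀ x ∈ U, L x ∈ W := fun x hx => interior_subset hx.2
  set DR : Euc n → (Euc n →L[ℝ] Euc n) := fun x =>
    (1 / S.γ) • (ContinuousLinearMap.id ℝ (Euc n) - (P (L x)).comp (Q x)) with hDRdef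
  refine ⟨U, hUopen, hxsU,
    fun x => S.R x - S.γ • (f'' x (S.R x)),
    fun x => DR x - S.γ • ((f'' x).comp (DR x) + (f3 x).flip (S.R x)),
    ?_, ?_, ?_, ?_⟩
  · -- gradient of fbe
    intro x hx
    have hproxC : ContinuousAt S.prox (L x) :=
      (hP (L x) (hUW x hx)).differentiableAt.continuousAt
    have hm : HasGradientAt S.m (S.γ⁻¹ • (L x - S.prox (L x))) (L x) := S.m_grad hproxC
    have hgmv : S.γ⁻¹ • (L x - S.prox (L x)) = S.R x - S.f' x := by
      show S.γ⁻¹ • (x - S.γ • S.f' x - S.prox (L x)) = (1 / S.γ) • (x - S.T x) - S.f' x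
      have hT : S.T x = S.prox (L x) := rfl
      rw [hT]
      match_scalars <;> field_simp
    rw [hgmv] at hm
    have hcomp : HasFDerivAt (fun y => S.m (L y))
        (((InnerProductSpace.toDual ℝ (Euc n)) (S.R x - S.f' x)).comp (Q x)) x :=
      hm.hasFDerivAt.comp x (hLder x)
    have hfF : HasFDerivAt S.f ((InnerProductSpace.toDual ℝ (Euc n)) (S.f' x)) x :=
      (S.hf x).hasFDerivAt
    have hnorm : HasFDerivAt (fun y => ⟪S.f' y, S.f' y⟫)
        ((fderivInnerCLM ℝ (S.f' x, S.f' x)).comp ((f'' x).prod (f'' x))) x :=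
      (hf'' x).inner ℝ (hf'' x)
    have hc : HasFDerivAt (fun y => S.f y - S.γ/2 * ⟪S.f' y, S.f' y⟫)
        ((InnerProductSpace.toDual ℝ (Euc n)) (S.f' x)
          - (S.γ/2) • ((fderivInnerCLM ℝ (S.f' x, S.f' x)).comp ((f'' x).prod (f'' x)))) x :=
      hfF.sub (hnorm.const_smul (S.γ/2))
    have htot := hc.add hcomp
    rw [S.fbe_eq, hasGradientAt_iff_hasFDerivAt]
    have hDeq : (InnerProductSpace.toDual ℝ (Euc n)) (S.f' x)
          - (S.γ/2) • ((fderivInnerCLM ℝ (S.f' x, S.f' x)).comp ((f'' x).prod (f'' x)))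
          + ((InnerProductSpace.toDual ℝ (Euc n)) (S.R x - S.f' x)).comp (Q x)
        = (InnerProductSpace.toDual ℝ (Euc n)) (S.R x - S.γ • (f'' x (S.R x))) := by
      ext h
      simp only [ContinuousLinearMap.add_apply, ContinuousLinearMap.coe_sub',
        Pi.sub_apply, ContinuousLinearMap.coe_smul', Pi.smul_apply,
        ContinuousLinearMap.coe_comp', Function.comp_apply, hQdef,
        ContinuousLinearMap.sub_apply, ContinuousLinearMap.smul_apply,
        ContinuousLinearMap.id_apply, fderivInnerCLM_apply, ContinuousLinearMap.prod_apply,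
        InnerProductSpace.toDual_apply_apply, smul_eq_mul]
      exact fbe_key_inner S.γ (S.f' x) (S.R x) h (f'' x) (S.f''_symm f'' hf'' x)
    rw [← hDeq]
    exact htot
  · -- second derivative
    intro x hx
    have hT : HasFDerivAt (fun y => S.prox (L y)) ((P (L x)).comp (Q x)) x :=
      (hP (L x) (hUW x hx)).comp x (hLder x)
    have hRder : HasFDerivAt S.R (DR x) x := by
      have h1 : HasFDerivAt (fun y => (1 / S.γ) • (y - S.prox (L y)))
          ((1 / S.γ) • (ContinuousLinearMap.id ℝ (Euc n) - (P (L x)).comp (Q x))) x :=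
        ((hasFDerivAt_id x).sub hT).const_smul (1 / S.γ)
      exact h1
    have hAr : HasFDerivAt (fun y => f'' y (S.R y))
        ((f'' x).comp (DR x) + (f3 x).flip (S.R x)) x :=
      (hf3 x (hUV x hx)).clm_apply hRder
    exact hRder.sub (hAr.const_smul S.γ)
  · -- continuity of H
    have hPL : ContinuousOn (fun x => P (L x)) U :=
      hPcont.comp hLcont.continuousOn (fun x hx => hUW x hx)
    have hQc : Continuous Q := continuous_const.sub (hf''cont.const_smul S.γ)
    have hDRc : ContinuousOn DR U :=
      (continuousOn_const.sub (hPL.clm_comp hQc.continuousOn)).const_smul (1 / S.γ)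
    have hproxLC : ContinuousOn (fun x => S.prox (L x)) U := fun x hx =>
      (((hP (L x) (hUW x hx)).differentiableAt.continuousAt.comp
        hLcont.continuousAt)).continuousWithinAt
    have hRc : ContinuousOn S.R U := by
      have h1 : ContinuousOn (fun x => (1 / S.γ) • (x - S.prox (L x))) U :=
        (continuousOn_id.sub hproxLC).const_smul (1 / S.γ)
      exact h1
    have hflipc : ContinuousOn (fun x => (f3 x).flip) U := by
      have hfl : Continuous (ContinuousLinearMap.flipₗᵢ ℝ (Euc n) (Euc n) (Euc n)) :=
        (ContinuousLinearMap.flipₗᵢ ℝ (Euc n) (Euc n) (Euc n)).continuous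
      exact hfl.comp_continuousOn (hf3cont.mono (fun x hx => hUV x hx))
    have hΛ : ContinuousOn (fun x => (f3 x).flip (S.R x)) U := hflipc.clm_apply hRc
    exact hDRc.sub (((hf''cont.continuousOn.clm_comp hDRc).add hΛ).const_smul S.γ)
  · -- the bound
    intro x hx
    have hBeq : S.γ⁻¹ •
        ((ContinuousLinearMap.id ℝ (Euc n) - S.γ • f'' x).comp
          (ContinuousLinearMap.id ℝ (Euc n)
            - (P (x - S.γ • S.f' x)).comp (ContinuousLinearMap.id ℝ (Euc n) - S.γ • f'' x)))
        = DR x - S.γ • ((f'' x).comp (DR x)) := by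
      refine ContinuousLinearMap.ext fun h => ?_
      simp only [hDRdef, hQdef, hLdef, ContinuousLinearMap.coe_smul', Pi.smul_apply,
        ContinuousLinearMap.coe_comp', Function.comp_apply, ContinuousLinearMap.coe_sub',
        Pi.sub_apply, ContinuousLinearMap.smul_apply, ContinuousLinearMap.sub_apply,
        ContinuousLinearMap.id_apply, map_sub, map_smul, smul_sub]
      match_scalars <;> field_simp
    have hsub : (DR x - S.γ • ((f'' x).comp (DR x) + (f3 x).flip (S.R x)))
        - (DR x - S.γ • ((f'' x).comp (DR x))) = -(S.γ • (f3 x).flip (S.R x)) := by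
      rw [smul_add]
      abel
    rw [hBeq, hsub, norm_neg]
    have h1 : ‖(f3 x).flip (S.R x)‖ ≤ ‖(f3 x).flip‖ * ‖S.R x‖ :=
      ContinuousLinearMap.le_opNorm _ _
    rw [ContinuousLinearMap.opNorm_flip] at h1
    calc ‖S.γ • (f3 x).flip (S.R x)‖ ≤ ‖S.γ‖ * ‖(f3 x).flip (S.R x)‖ := ContinuousLinearMap.opNorm_smul_le _ _
      _ = S.γ * ‖(f3 x).flip (S.R x)‖ := by rw [Real.norm_eq_abs, abs_of_pos hγ0]
      _ ≤ S.γ * (‖f3 x‖ * ‖S.R x‖) := mul_le_mul_of_nonneg_left h1 hγ0.le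
      _ = S.γ * ‖f3 x‖ * ‖S.R x‖ := by ring
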